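/- arXiv:1904.09666 — 5 statements merged into one kernel-verified Lean document; each statement's English description precedes it below -/
import Mathlib

section
/- Let u be an infinite sequence over a finite alphabet. If there exists n ≥ 1 such that p_u(n) = p_u(n+1), then u is ultimately periodic. -/
/-- The complexity function of an infinite sequence `u` over an alphabet `A`. -/
noncomputable def complexity {A : Type*} (u : ℕ → A) (n : ℕ) : ℕ :=
  Set.ncard {w : Fin n → A | ∃ k, ∀ i : Fin n, w i = u (k + i)}

/-- `u` is ultimately periodic. -/
def UltimatelyPeriodic {A : Type*} (u : ℕ → A) : Prop :=
  ∃ N, ∃ p ≥ 1, ∀ k ≥ N, u (k + p) = u k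

theorem stmt1 {A : Type*} [Fintype A] (u : ℕ → A)
    (h : ∃ n ≥ 1, complexity u n = complexity u (n + 1)) :
    UltimatelyPeriodic u := by
  classical
  obtain ⟨n, hn1, hc⟩ := h
  set S : Set (Fin (n+1) → A) := {w | ∃ k, ∀ i : Fin (n+1), w i = u (k + i)} with hS
  set T : Set (Fin n → A) := {w | ∃ k, ∀ i : Fin n, w i = u (k + i)} with hT
  have hSfin : S.Finite := Set.toFinite S
  -- the window map
  set W : ℕ → (Fin n → A) := fun k i => u (k + i) with hW
  set V : ℕ → (Fin (n+1) → A) := fun k i => u (k + i) with hV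
  have hVS : ∀ k, V k ∈ S := fun k => ⟨k, fun i => rfl⟩
  have hWT : ∀ k, W k ∈ T := fun k => ⟨k, fun i => rfl⟩
  -- key: same window implies same next letter
  have key : ∀ k l : ℕ, W k = W l → u (k + n) = u (l + n) := by
    intro k l hkl
    have hinj := Set.inj_on_of_surj_on_of_ncard_le
      (s := S) (t := T) (fun w _ => fun i : Fin n => w i.castSucc)
      (fun w hw => by
        obtain ⟨k, hk⟩ := hw
        exact ⟨k, fun i => by simpa using hk i.castSucc⟩)
      (fun b hb => by
        obtain ⟨k, hk⟩ := hb
        refine ⟨V k, hVS k, ?_⟩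
        funext i
        rw [hk i]
        simp [V])
      (by
        have : complexity u (n+1) ≤ complexity u n := le_of_eq hc.symm
        simpa [complexity, hS, hT] using this)
      (hVS k) (hVS l)
      (by
        funext i
        show u (k + (i.castSucc : ℕ)) = u (l + (i.castSucc : ℕ))
        simp only [Fin.coe_castSucc]
        exact congrFun hkl i) hSfin
    have := congrFun hinj (Fin.last n)
    simpa [V, Fin.val_last] using this
  -- same window propagates
  have step : ∀ k l : ℕ, W k = W l → W (k+1) = W (l+1) := by
    intro k l hkl
    funext i
    show u (k + 1 + i) = u (l + 1 + i)
    rcases lt_or_ge ((i : ℕ) + 1) n with hi | hi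
    · have := congrFun hkl ⟨(i : ℕ) + 1, hi⟩
      simpa [W, Nat.add_comm, Nat.add_assoc, Nat.add_left_comm] using this
    · have hieq : (i : ℕ) + 1 = n := le_antisymm (Nat.succ_le_of_lt i.isLt) hi
      have := key k l hkl
      rw [← hieq] at this
      simpa [Nat.add_comm, Nat.add_assoc, Nat.add_left_comm] using this
  have prop : ∀ k l : ℕ, W k = W l → ∀ m, W (k+m) = W (l+m) := by
    intro k l hkl m
    induction m with
    | zero => simpa using hkl
    | succ m ih => exact step _ _ ih
  -- pigeonhole
  obtain ⟨a, b, hab, hWab⟩ := Finite.exists_ne_map_eq_of_infinite W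
  wlog hlt : a < b generalizing a b
  · exact this b a hab.symm hWab.symm (hab.lt_or_gt.resolve_left hlt)
  refine ⟨a, b - a, Nat.le_sub_of_add_le (by omega), fun k hk => ?_⟩
  obtain ⟨m, rfl⟩ := Nat.exists_eq_add_of_le hk
  have heq : u (a + m) = u (b + m) := by
    have := congrFun (prop a b hWab m) (⟨0, hn1⟩ : Fin n)
    simpa [W] using this
  have : a + m + (b - a) = b + m := by omega
  rw [this]
  exact heq.symm
end

section
/- Let u be an infinite sequence over a finite alphabet that is not ultimately periodic. Then p_u(n) ≥ n + 1 for all n ≥ 1. -/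
private def Fct {A : Type*} (u : ℕ → A) (n : ℕ) : Set (Fin n → A) :=
  {w | ∃ k, ∀ i : Fin n, w i = u (k + i)}

private lemma complexity_eq_ncard {A : Type*} (u : ℕ → A) (n : ℕ) :
    complexity u n = (Fct u n).ncard := rfl

private lemma fct_image {A : Type*} (u : ℕ → A) (n : ℕ) :
    (fun (w : Fin (n+1) → A) (i : Fin n) => w i.castSucc) '' Fct u (n+1) = Fct u n := by
  ext w
  constructor
  · rintro ⟨v, ⟨k, hk⟩, rfl⟩
    exact ⟨k, fun i => by simpa using hk i.castSucc⟩
  · rintro ⟨k, hk⟩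
    refine ⟨fun i => u (k + i), ⟨k, fun i => rfl⟩, ?_⟩
    funext i
    simpa using (hk i).symm

private lemma complexity_mono {A : Type*} [Fintype A] (u : ℕ → A) (n : ℕ) :
    complexity u n ≤ complexity u (n+1) := by
  rw [complexity_eq_ncard, complexity_eq_ncard, ← fct_image u n]
  exact Set.ncard_image_le (Set.toFinite _)

private lemma periodic_of_complexity_eq {A : Type*} [Fintype A] (u : ℕ → A) (n : ℕ)
    (h : complexity u (n+1) = complexity u n) : UltimatelyPeriodic u := by
  -- the restriction map is injective on factors of length n+1
  have hinj : Set.InjOn (fun (w : Fin (n+1) → A) (i : Fin n) => w i.castSucc)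
      (Fct u (n+1)) := by
    apply Set.injOn_of_ncard_image_eq (hs := Set.toFinite _)
    rw [fct_image u n, ← complexity_eq_ncard, ← complexity_eq_ncard, h]
  -- determinism: an equal window of length n forces equal next letters
  have hdet : ∀ k k', (∀ i : Fin n, u (k + i) = u (k' + i)) → u (k + n) = u (k' + n) := by
    intro k k' hw
    have hk : (fun i : Fin (n+1) => u (k + i)) ∈ Fct u (n+1) := ⟨k, fun i => rfl⟩
    have hk' : (fun i : Fin (n+1) => u (k' + i)) ∈ Fct u (n+1) := ⟨k', fun i => rfl⟩
    have heq : (fun i : Fin n => u (k + (i.castSucc : ℕ)))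
        = (fun i : Fin n => u (k' + (i.castSucc : ℕ))) := by
      funext i
      simpa using hw i
    have := hinj hk hk' heq
    have := congrFun this (Fin.last n)
    simpa using this
  -- propagation: equal windows force equality forever
  have claim : ∀ k k', (∀ i : Fin n, u (k + i) = u (k' + i)) →
      ∀ j, u (k + j) = u (k' + j) := by
    intro k k' hw j
    induction j using Nat.strong_induction_on with
    | _ j ih =>
      rcases lt_or_ge j n with hj | hj
      · exact hw ⟨j, hj⟩
      · have h1 : ∀ i : Fin n, u (k + (j - n) + i) = u (k' + (j - n) + i) := by
          intro i
          have hi : (i : ℕ) < n := i.isLt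
          have := ih (j - n + i) (by omega)
          rw [Nat.add_assoc, Nat.add_assoc]
          exact this
        have h2 := hdet (k + (j - n)) (k' + (j - n)) h1
        have e1 : k + (j - n) + n = k + j := by omega
        have e2 : k' + (j - n) + n = k' + j := by omega
        rw [e1, e2] at h2
        exact h2
  -- pigeonhole: two equal windows
  obtain ⟨k1, k2, hne, hfe⟩ :=
    Finite.exists_ne_map_eq_of_infinite (fun k => fun i : Fin n => u (k + i))
  have main : ∀ k1 k2 : ℕ, k1 < k2 →
      ((fun i : Fin n => u (k1 + i)) = fun i : Fin n => u (k2 + i)) →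
      UltimatelyPeriodic u := by
    intro k1 k2 hlt hfe
    refine ⟨k1, k2 - k1, by omega, ?_⟩
    intro k hk
    have hw : ∀ i : Fin n, u (k1 + i) = u (k2 + i) := fun i => congrFun hfe i
    have := claim k1 k2 hw (k - k1)
    have e1 : k + (k2 - k1) = k2 + (k - k1) := by omega
    have e2 : k1 + (k - k1) = k := by omega
    rw [e1, ← this, e2]
  rcases lt_or_gt_of_ne hne with hlt | hlt
  · exact main k1 k2 hlt hfe
  · exact main k2 k1 hlt hfe.symm

theorem stmt2 {A : Type*} [Fintype A] (u : ℕ → A)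
    (h : ¬ UltimatelyPeriodic u) :
    ∀ n ≥ 1, n + 1 ≤ complexity u n := by
  have base : 1 ≤ complexity u 0 := by
    rw [complexity_eq_ncard]
    have hne : (Fct u 0).Nonempty := ⟨fun i => i.elim0, 0, fun i => i.elim0⟩
    have := (Set.ncard_pos (Set.toFinite _)).mpr hne
    omega
  have step : ∀ n, complexity u n + 1 ≤ complexity u (n+1) := by
    intro n
    have hne : complexity u (n+1) ≠ complexity u n :=
      fun he => h (periodic_of_complexity_eq u n he)
    have hle : complexity u n ≤ complexity u (n+1) := complexity_mono u n
    omega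
  have main : ∀ n, n + 1 ≤ complexity u n := by
    intro n
    induction n with
    | zero => exact base
    | succ n ih => have := step n; omega
  exact fun n _ => main n
end

section
/- Let F be a row-stochastic K × K matrix all of whose entries are at least m > 0. Then for any two probability vectors p, q in the standard simplex of ℝ^K, the images satisfy ‖F^T p − F^T q‖₁ ≤ (1 − K·m) ‖p − q‖₁, where ‖·‖₁ is the ℓ¹ norm. In particular F^T is a contraction on the simplex when K·m > 0. -/
/-- If `F` is a row-stochastic `K × K` matrix whose entries are all at least `m > 0`,
then `F^T` contracts the `ℓ¹` distance between probability vectors by the factor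
`1 - K * m`. -/
theorem stmt8 {K : ℕ} (F : Fin K → Fin K → ℝ) (m : ℝ) (hm : 0 < m)
    (hFm : ∀ i j, m ≤ F i j) (hFrow : ∀ i, ∑ j, F i j = 1)
    (p q : Fin K → ℝ)
    (hp : (∀ i, 0 ≤ p i) ∧ ∑ i, p i = 1) (hq : (∀ i, 0 ≤ q i) ∧ ∑ i, q i = 1) :
    ∑ j, |(∑ i, F i j * p i) - ∑ i, F i j * q i| ≤ (1 - K * m) * ∑ i, |p i - q i| := by
  obtain ⟨hp0, hp1⟩ := hp
  obtain ⟨hq0, hq1⟩ := hq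
  set d := fun i => p i - q i with hd
  have hdsum : ∑ i, d i = 0 := by
    simp [hd, Finset.sum_sub_distrib, hp1, hq1]
  have key : ∀ j, |(∑ i, F i j * p i) - ∑ i, F i j * q i| ≤ ∑ i, (F i j - m) * |d i| := by
    intro j
    have hmd : ∑ i, m * d i = 0 := by
      rw [← Finset.mul_sum, hdsum, mul_zero]
    have h1 : (∑ i, F i j * p i) - ∑ i, F i j * q i = ∑ i, (F i j - m) * d i := by
      rw [← Finset.sum_sub_distrib]
      calc ∑ i, (F i j * p i - F i j * q i) = ∑ i, F i j * d i := by
            simp [hd, mul_sub]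
        _ = ∑ i, (F i j - m) * d i + ∑ i, m * d i := by
            rw [← Finset.sum_add_distrib]
            refine Finset.sum_congr rfl fun i _ => ?_
            ring
        _ = ∑ i, (F i j - m) * d i := by rw [hmd, add_zero]
    rw [h1]
    calc |∑ i, (F i j - m) * d i| ≤ ∑ i, |(F i j - m) * d i| :=
          Finset.abs_sum_le_sum_abs _ _
      _ = ∑ i, (F i j - m) * |d i| := by
          refine Finset.sum_congr rfl fun i _ => ?_
          rw [abs_mul, abs_of_nonneg (by linarith [hFm i j])]
  calc ∑ j, |(∑ i, F i j * p i) - ∑ i, F i j * q i|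
      ≤ ∑ j, ∑ i, (F i j - m) * |d i| := Finset.sum_le_sum fun j _ => key j
    _ = ∑ i, (∑ j, (F i j - m)) * |d i| := by
        rw [Finset.sum_comm]
        exact Finset.sum_congr rfl fun i _ => (Finset.sum_mul _ _ _).symm
    _ = (1 - K * m) * ∑ i, |p i - q i| := by
        rw [Finset.mul_sum]
        refine Finset.sum_congr rfl fun i _ => ?_
        have : ∑ j, (F i j - m) = 1 - K * m := by
          rw [Finset.sum_sub_distrib, hFrow i]
          simp [mul_comm]
        rw [this, hd]
end

section
/- Let (F_n) be a sequence of row-stochastic matrices (F_n of size |V_{n+1}| × |V_n|) and let m_n = min over all entries of F_n. If Σ_n m_n = ∞ and the sizes |V_n| are uniformly bounded below by 1 and above by K, then for any two sequences of probability vectors (p^(n)), (q^(n)) satisfying F_n^T p^(n+1) = p^(n) and F_n^T q^(n+1) = q^(n) for all n, one has p^(n) = q^(n) for all n. -/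
/-!
Couple the two sequences through their difference `x⁽ⁿ⁾ = p⁽ⁿ⁾ - q⁽ⁿ⁾`, which has total mass `0`.
Subtracting the minimal entry `mₙ` from every entry of `Fₙ` does not change `Fₙᵀ x⁽ⁿ⁺¹⁾`, and leaves
a nonnegative matrix with row sums `1 - |Vₙ| mₙ ≤ 1 - mₙ`; hence
`‖x⁽ⁿ⁾‖₁ ≤ (1 - mₙ) ‖x⁽ⁿ⁺¹⁾‖₁ ≤ exp (-mₙ) ‖x⁽ⁿ⁺¹⁾‖₁`. Iterating, `‖x⁽ᴺ⁾‖₁ ≤ 2 exp (-∑_{N ≤ i < N + k} mᵢ)`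
for every `k`, and the divergence of `∑ mᵢ` forces `x⁽ᴺ⁾ = 0`.
-/

open Finset Filter

theorem sum_abs_sum_mul_le_of_le_of_sum_eq_zero {α β : Type*} [Fintype α] [Fintype β]
    (F : β → α → ℝ) (c : ℝ) (hc : ∀ v w, c ≤ F v w) (hrow : ∀ v, ∑ w, F v w = 1)
    (x : β → ℝ) (hx : ∑ v, x v = 0) :
    ∑ w, |∑ v, F v w * x v| ≤ (1 - Fintype.card α * c) * ∑ v, |x v| := by
  have hshift w : ∑ v, F v w * x v = ∑ v, (F v w - c) * x v := by
    simp only [sub_mul, sum_sub_distrib, ← mul_sum, hx, mul_zero, sub_zero]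
  calc ∑ w, |∑ v, F v w * x v|
      ≤ ∑ w, ∑ v, (F v w - c) * |x v| := by
        gcongr with w
        rw [hshift]
        refine (abs_sum_le_sum_abs _ _).trans_eq (sum_congr rfl fun v _ => ?_)
        rw [abs_mul, abs_of_nonneg (sub_nonneg.2 (hc v w))]
    _ = (1 - Fintype.card α * c) * ∑ v, |x v| := by
        rw [sum_comm, mul_sum]
        simp only [← sum_mul, sum_sub_distrib, hrow, sum_const, card_univ, nsmul_eq_mul]

theorem le_exp_neg_sum_mul_of_le_one_sub_mul_succ {d m : ℕ → ℝ} (hd : ∀ n, 0 ≤ d n)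
    (hstep : ∀ n, d n ≤ (1 - m n) * d (n + 1)) (N k : ℕ) :
    d N ≤ Real.exp (-∑ i ∈ range k, m (N + i)) * d (N + k) := by
  induction k with
  | zero => simp
  | succ k ih =>
    calc d N ≤ Real.exp (-∑ i ∈ range k, m (N + i)) * d (N + k) := ih
      _ ≤ Real.exp (-∑ i ∈ range k, m (N + i)) * (Real.exp (-m (N + k)) * d (N + k + 1)) := by
        gcongr
        exact (hstep _).trans (by gcongr; exacts [hd _, Real.one_sub_le_exp_neg _])
      _ = Real.exp (-∑ i ∈ range (k + 1), m (N + i)) * d (N + (k + 1)) := by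
        rw [sum_range_succ, neg_add, Real.exp_add, mul_assoc, add_assoc]

theorem eq_zero_of_le_one_sub_mul_succ {d m : ℕ → ℝ} {C : ℝ} (hd : ∀ n, 0 ≤ d n)
    (hdC : ∀ n, d n ≤ C) (hm : ∀ n, 0 ≤ m n) (hdiv : ¬ Summable m)
    (hstep : ∀ n, d n ≤ (1 - m n) * d (n + 1)) (N : ℕ) : d N = 0 := by
  have hsum : Tendsto (fun k => ∑ i ∈ range k, m (N + i)) atTop atTop := by
    refine (not_summable_iff_tendsto_nat_atTop_of_nonneg fun i => hm (N + i)).1 ?_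
    simpa only [add_comm N] using (summable_nat_add_iff N).not.2 hdiv
  have hlim : Tendsto (fun k => Real.exp (-∑ i ∈ range k, m (N + i)) * C) atTop (nhds 0) := by
    simpa using (Real.tendsto_exp_atBot.comp (tendsto_neg_atTop_atBot.comp hsum)).mul_const C
  refine le_antisymm (ge_of_tendsto' hlim fun k => ?_) (hd N)
  exact (le_exp_neg_sum_mul_of_le_one_sub_mul_succ hd hstep N k).trans (by gcongr; exact hdC _)

theorem sum_abs_sub_le_sum_add {α : Type*} [Fintype α] {x y : α → ℝ}
    (hx : ∀ v, 0 ≤ x v) (hy : ∀ v, 0 ≤ y v) :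
    ∑ v, |x v - y v| ≤ ∑ v, x v + ∑ v, y v := by
  rw [← sum_add_distrib]
  gcongr with v
  exact abs_sub_le_iff.2 ⟨by linarith [hy v], by linarith [hx v]⟩

theorem stmt9_general (V : ℕ → Type*) [∀ n, Fintype (V n)]
    (F : ∀ n, V (n + 1) → V n → ℝ)
    (hFnn : ∀ n v w, 0 ≤ F n v w) (hFrow : ∀ n v, ∑ w, F n v w = 1)
    (m : ℕ → ℝ) (hm : ∀ n, IsLeast {x : ℝ | ∃ v w, F n v w = x} (m n))
    (hdiv : ¬ Summable m)
    (p q : ∀ n, V n → ℝ)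
    (hp : ∀ n, (∀ v, 0 ≤ p n v) ∧ ∑ v, p n v = 1)
    (hq : ∀ n, (∀ v, 0 ≤ q n v) ∧ ∑ v, q n v = 1)
    (hpF : ∀ n (w : V n), ∑ v, F n v w * p (n + 1) v = p n w)
    (hqF : ∀ n (w : V n), ∑ v, F n v w * q (n + 1) v = q n w) :
    ∀ n, p n = q n := by
  set d : ℕ → ℝ := fun n => ∑ w, |p n w - q n w|
  have hd_nonneg n : 0 ≤ d n := sum_nonneg fun _ _ => abs_nonneg _
  have hm_nonneg n : 0 ≤ m n := by
    obtain ⟨v, w, hvw⟩ := (hm n).1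
    exact hvw ▸ hFnn n v w
  have hstep n : d n ≤ (1 - m n) * d (n + 1) := by
    obtain ⟨-, w, -⟩ := (hm n).1
    have hcard : (1 : ℝ) ≤ Fintype.card (V n) := by exact_mod_cast Fintype.card_pos_iff.2 ⟨w⟩
    calc d n = ∑ w, |∑ v, F n v w * (p (n + 1) v - q (n + 1) v)| := by
          simp only [d, mul_sub, sum_sub_distrib, hpF, hqF]
      _ ≤ (1 - Fintype.card (V n) * m n) * d (n + 1) :=
          sum_abs_sum_mul_le_of_le_of_sum_eq_zero (F n) (m n) (fun v w => (hm n).2 ⟨v, w, rfl⟩)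
            (hFrow n) _ (by rw [sum_sub_distrib, (hp _).2, (hq _).2, sub_self])
      _ ≤ (1 - m n) * d (n + 1) := by
          gcongr
          nlinarith [hm_nonneg n]
  have hd_le_two n : d n ≤ 2 := by
    simpa only [(hp n).2, (hq n).2, one_add_one_eq_two] using
      sum_abs_sub_le_sum_add (hp n).1 (hq n).1
  intro n
  ext w
  have hd := eq_zero_of_le_one_sub_mul_succ hd_nonneg hd_le_two hm_nonneg hdiv hstep n
  rw [sum_eq_zero_iff_of_nonneg fun _ _ => abs_nonneg _] at hd
  exact sub_eq_zero.1 (abs_eq_zero.1 (hd w (mem_univ w)))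

/-- If `(F n)` is a sequence of row-stochastic matrices whose minimal entries `m n`
satisfy `∑ m n = ∞`, and the level sizes are uniformly bounded (`1 ≤ |V n| ≤ K`), then
any two sequences of probability vectors `(p n)`, `(q n)` with `F_n^T p^{(n+1)} = p^{(n)}`
and `F_n^T q^{(n+1)} = q^{(n)}` coincide. -/
theorem stmt9 (K : ℕ) (V : ℕ → Type*) [∀ n, Fintype (V n)] [∀ n, Nonempty (V n)]
    (hK : ∀ n, Fintype.card (V n) ≤ K)
    (F : ∀ n, V (n + 1) → V n → ℝ)
    (hFnn : ∀ n v w, 0 ≤ F n v w) (hFrow : ∀ n v, ∑ w, F n v w = 1)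
    (m : ℕ → ℝ) (hm : ∀ n, IsLeast {x : ℝ | ∃ v w, F n v w = x} (m n))
    (hdiv : ¬ Summable m)
    (p q : ∀ n, V n → ℝ)
    (hp : ∀ n, (∀ v, 0 ≤ p n v) ∧ ∑ v, p n v = 1)
    (hq : ∀ n, (∀ v, 0 ≤ q n v) ∧ ∑ v, q n v = 1)
    (hpF : ∀ n (w : V n), ∑ v, F n v w * p (n + 1) v = p n w)
    (hqF : ∀ n (w : V n), ∑ v, F n v w * q (n + 1) v = q n w) :
    ∀ n, p n = q n :=
  stmt9_general V F hFnn hFrow m hm hdiv p q hp hq hpF hqF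
end

section
/- Let (a_n), (b_n) be sequences of nonnegative reals with a_n + b_n = 1 for each n, and let F_n be the 2×2 symmetric stochastic matrix with rows (a_n, b_n) and (b_n, a_n). Then for any n, m, the product G = F_{n+m} · F_{n+m−1} · ... · F_n satisfies: the difference of its two rows has ℓ¹ norm equal to 2 · Π_{i=0}^{m} |a_{n+i} − b_{n+i}|. -/
/-- The product `F (n+m) * F (n+m-1) * ⋯ * F n` of a sequence of `2×2` matrices. -/
def matProd (F : ℕ → Matrix (Fin 2) (Fin 2) ℝ) (n : ℕ) : ℕ → Matrix (Fin 2) (Fin 2) ℝ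
  | 0 => F n
  | m + 1 => F (n + m + 1) * matProd F n m

lemma matProd_struct (a b : ℕ → ℝ)
    (F : ℕ → Matrix (Fin 2) (Fin 2) ℝ) (hF : ∀ n, F n = !![a n, b n; b n, a n])
    (n : ℕ) : ∀ m, matProd F n m 0 0 = matProd F n m 1 1 ∧
      matProd F n m 0 1 = matProd F n m 1 0 ∧
      matProd F n m 0 0 - matProd F n m 0 1 =
        ∏ i ∈ Finset.range (m + 1), (a (n + i) - b (n + i)) := by
  intro m
  induction m with
  | zero => simp [matProd, hF n]
  | succ m ih =>
    obtain ⟨h1, h2, h3⟩ := ih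
    have key : ∀ i j, matProd F n (m + 1) i j =
        F (n + m + 1) i 0 * matProd F n m 0 j + F (n + m + 1) i 1 * matProd F n m 1 j := by
      intro i j
      simp [matProd, Matrix.mul_apply, Fin.sum_univ_two]
    simp only [key, hF (n + m + 1)]
    rw [Finset.prod_range_succ, ← h3]
    norm_num [Matrix.cons_val_zero, Matrix.cons_val_one]
    refine ⟨by rw [h1, h2]; ring, by rw [h1, h2]; ring, ?_⟩
    rw [h1, h2]; ring_nf

/-- For symmetric stochastic matrices `F i = [[a i, b i],[b i, a i]]`, the `ℓ¹` norm of the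
difference of the two rows of `G = F (n+m) ⋯ F n` equals `2 ∏_{i=0}^{m} |a (n+i) - b (n+i)|`. -/
theorem stmt12 (a b : ℕ → ℝ) (ha : ∀ n, 0 ≤ a n) (hb : ∀ n, 0 ≤ b n)
    (hab : ∀ n, a n + b n = 1)
    (F : ℕ → Matrix (Fin 2) (Fin 2) ℝ) (hF : ∀ n, F n = !![a n, b n; b n, a n])
    (n m : ℕ) :
    |matProd F n m 0 0 - matProd F n m 1 0| + |matProd F n m 0 1 - matProd F n m 1 1| =
      2 * ∏ i ∈ Finset.range (m + 1), |a (n + i) - b (n + i)| := by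
  obtain ⟨h1, h2, h3⟩ := matProd_struct a b F hF n m
  rw [← Finset.abs_prod, ← h3, ← h2, h1]
  rw [abs_sub_comm (matProd F n m 0 1)]
  ring
end
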